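/- Let G=(V,E) be a finite simple graph and 𝒰 a set of utter cliques of G such that ⋃_{[W,F]∈𝒰} E(W) = E. Then a binary point (x,y) ∈ {0,1}^V × {0,1}^E is the extended incidence vector of a co-2-plex of G if and only if it satisfies x(W) + y(F ∩ E(V∖W)) − y(E(W)) ≤ 1 for every [W,F] ∈ 𝒰 and y(δ(v)) ≤ x_v for every v ∈ V. -/

import Mathlib

/-!
For a co-2-plex `S` and an utter clique `[W, F]`, the set `W ∩ S` has at most two vertices
(they are pairwise adjacent), at most one edge of `F` lies in `E(S)` (two such edges would be
adjacent in `u(G)`, giving a vertex of `S` two neighbours in `S`), no edge of `F ∩ E(V ∖ W)`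
lies in `E(S)` once `W ∩ S` is nonempty, and if `|W ∩ S| = 2` its two vertices span an edge of
`E(W) ∩ E(S)`. This is the validity of the clique inequalities; the degree inequalities say that
`E(S)` is a matching, i.e. that `S` is a co-2-plex.

Conversely write a binary point as `(χ^S, χ^M)`. The degree inequalities say that `M ⊆ E(S)` is a
matching. An edge `e ∈ E(S)` lies in `E(W)` for some `[W, F]` of the cover; there
`|W ∩ S| ≤ 1 + |E(W) ∩ M| ≤ 1 + |W ∩ S| / 2` and `|W ∩ S| ≥ 2`, so `W ∩ S` consists of the two ends of
`e` and the edge of `M` in `E(W)` is `e`. Hence `M = E(S)`, and `S` is a co-2-plex.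
-/

open Finset
open scoped Classical

noncomputable section

variable {V : Type*} [Fintype V]

/-- A co-2-plex: a set of vertices inducing a subgraph of maximum degree at most 1. -/
def IsCo2Plex {α : Type*} (G : SimpleGraph α) (S : Finset α) : Prop :=
  ∀ u ∈ S, (S.filter fun v => G.Adj u v).card ≤ 1

/-- Incidence vector of a vertex set. -/
def chiV {α : Type*} (S : Finset α) : α → ℝ := fun v => if v ∈ S then 1 else 0

/-- Incidence vector (on edges) of the set of edges with both endpoints in `S`. -/
def chiE {α : Type*} (G : SimpleGraph α) (S : Finset α) : G.edgeSet → ℝ :=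
  fun e => if ∀ v ∈ (e : Sym2 α), v ∈ S then 1 else 0

/-- The co-2-plex polytope. -/
def co2PlexPolytope (G : SimpleGraph V) : Set (V → ℝ) :=
  convexHull ℝ {x | ∃ S : Finset V, IsCo2Plex G S ∧ x = chiV S}

/-- The extended co-2-plex polytope. -/
def co2PlexPolytopeExt (G : SimpleGraph V) : Set ((V → ℝ) × (G.edgeSet → ℝ)) :=
  convexHull ℝ {p | ∃ S : Finset V, IsCo2Plex G S ∧ p = (chiV S, chiE G S)}

/-- δ(v): edges incident to `v`. -/
def inc (G : SimpleGraph V) (v : V) : Finset G.edgeSet :=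
  univ.filter fun e => v ∈ (e : Sym2 V)

/-- E(W): edges with both endpoints in W. -/
def edgesIn (G : SimpleGraph V) (W : Finset V) : Finset G.edgeSet :=
  univ.filter fun e => ∀ v ∈ (e : Sym2 V), v ∈ W

/-- E(V \ W): edges with both endpoints outside W. -/
def edgesOut (G : SimpleGraph V) (W : Finset V) : Finset G.edgeSet :=
  univ.filter fun e => ∀ v ∈ (e : Sym2 V), v ∉ W

/-- δ(W): edges with exactly one endpoint in W. -/
def edgesCut (G : SimpleGraph V) (W : Finset V) : Finset G.edgeSet :=
  univ.filter fun e => (∃ v ∈ (e : Sym2 V), v ∈ W) ∧ ∃ v ∈ (e : Sym2 V), v ∉ W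

/-- The utter graph of `G`. -/
def utter (G : SimpleGraph V) : SimpleGraph (V ⊕ G.edgeSet) where
  Adj a b :=
    match a, b with
    | Sum.inl u, Sum.inl v => G.Adj u v
    | Sum.inl w, Sum.inr e => w ∈ (e : Sym2 V) ∨ ∃ z ∈ (e : Sym2 V), G.Adj w z
    | Sum.inr e, Sum.inl w => w ∈ (e : Sym2 V) ∨ ∃ z ∈ (e : Sym2 V), G.Adj w z
    | Sum.inr e, Sum.inr f =>
        e ≠ f ∧ ((∃ v, v ∈ (e : Sym2 V) ∧ v ∈ (f : Sym2 V)) ∨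
          ∃ a ∈ (e : Sym2 V), ∃ b ∈ (f : Sym2 V), G.Adj a b)
  symm := by
    constructor
    rintro (u | e) (v | f) h
    · exact h.symm
    · exact h
    · exact h
    · obtain ⟨hne, h⟩ := h
      refine ⟨hne.symm, ?_⟩
      rcases h with ⟨v, hv1, hv2⟩ | ⟨a, ha, b, hb, hab⟩
      · exact Or.inl ⟨v, hv2, hv1⟩
      · exact Or.inr ⟨b, hb, a, ha, hab.symm⟩
  loopless := by
    constructor
    rintro (u | e) h
    · exact G.loopless.irrefl u h
    · exact h.1 rfl

/-- An utter clique: a pair [W, F] whose union is a clique of the utter graph. -/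
def IsUtterClique (G : SimpleGraph V) (W : Finset V) (F : Finset G.edgeSet) : Prop :=
  (utter G).IsClique (Sum.inl '' (W : Set V) ∪ Sum.inr '' (F : Set G.edgeSet))

/-- A maximal utter clique. -/
def IsMaxUtterClique (G : SimpleGraph V) (W : Finset V) (F : Finset G.edgeSet) : Prop :=
  IsUtterClique G W F ∧
    (∀ v ∉ W, ¬ IsUtterClique G (insert v W) F) ∧
    (∀ e ∉ F, ¬ IsUtterClique G W (insert e F))

/-- The contraction G/F: vertices are the connected components of the spanning
subgraph (V, F); two components are adjacent iff some edge of `G` joins them. -/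
def contract {α : Type*} (G : SimpleGraph α) (F : Set (Sym2 α)) :
    SimpleGraph (SimpleGraph.fromEdgeSet F).ConnectedComponent where
  Adj c d := c ≠ d ∧ ∃ u v, G.Adj u v ∧
      (SimpleGraph.fromEdgeSet F).connectedComponentMk u = c ∧
      (SimpleGraph.fromEdgeSet F).connectedComponentMk v = d
  symm := by
    constructor
    rintro c d ⟨hne, u, v, h, hu, hv⟩
    exact ⟨hne.symm, v, u, h.symm, hv, hu⟩
  loopless := by
    constructor
    rintro c ⟨hne, _⟩
    exact hne rfl

/-- A graph is perfect if every induced subgraph has chromatic number equal to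
its clique number. -/
def IsPerfect {α : Type*} (G : SimpleGraph α) : Prop :=
  ∀ s : Set α, (G.induce s).chromaticNumber = ((G.induce s).cliqueNum : ℕ∞)

/-- A graph is contraction perfect if all its contractions (by edge subsets) are perfect. -/
def ContractionPerfect (G : SimpleGraph V) : Prop :=
  ∀ F : Set (Sym2 V), F ⊆ G.edgeSet → IsPerfect (contract G F)

/-- Chordal: no induced cycle of length at least 4. -/
def Chordal (G : SimpleGraph V) : Prop :=
  ∀ n, 4 ≤ n → IsEmpty (SimpleGraph.cycleGraph n ↪g G)

/-- Maximal clique (as a finset). -/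
def IsMaxCliqueF (G : SimpleGraph V) (K : Finset V) : Prop :=
  G.IsClique (K : Set V) ∧ ∀ K' : Finset V, G.IsClique (K' : Set V) → K ⊆ K' → K = K'

/-- A 2-plex: every vertex of the induced subgraph has degree at least |K| - 2 in it. -/
def Is2Plex (G : SimpleGraph V) (K : Finset V) : Prop :=
  ∀ v ∈ K, K.card - 2 ≤ (K.filter fun u => G.Adj v u).card

/-- α₂(G[W]): the maximum cardinality of a co-2-plex contained in `W`. -/
def co2plexNumOn (G : SimpleGraph V) (W : Finset V) : ℕ :=
  Finset.univ.sup fun S : Finset V => if S ⊆ W ∧ IsCo2Plex G S then S.card else 0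

/-- Facet-defining inequality of a full-dimensional polytope in ℝ^α: a valid
inequality whose tight points contain `card α` affinely independent points. -/
def IsFacet {α : Type*} [Fintype α] (P : Set (α → ℝ)) (a : α → ℝ) (c : ℝ) : Prop :=
  (∀ x ∈ P, ∑ v, a v * x v ≤ c) ∧
  ∃ f : Fin (Fintype.card α) → (α → ℝ),
    AffineIndependent ℝ f ∧ ∀ i, f i ∈ P ∧ ∑ v, a v * f i v = c

/-- The polytope T(G) given by bounds and the star inequalities. -/
def TPoly (G : SimpleGraph V) [DecidableRel G.Adj] : Set (V → ℝ) :=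
  {x | (∀ v, 0 ≤ x v ∧ x v ≤ 1) ∧
    ∀ (w : V), ∀ W ⊆ G.neighborFinset w,
      ∑ v ∈ W, x v + ((W.card : ℝ) - 1) * x w ≤ (W.card : ℝ)}

/-- Total dual integrality of the system `A x ≤ b`. -/
def IsTDI {ι κ : Type*} [Fintype ι] [Fintype κ] (A : ι → κ → ℝ) (b : ι → ℝ) : Prop :=
  ∀ c : κ → ℤ, ∀ m : ℝ,
    IsGreatest {t | ∃ x : κ → ℝ, (∀ i, ∑ j, A i j * x j ≤ b i) ∧ t = ∑ j, (c j : ℝ) * x j} m →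
    ∃ π : ι → ℤ, (∀ i, 0 ≤ π i) ∧ (∀ j, ∑ i, (π i : ℝ) * A i j = (c j : ℝ)) ∧
      ∑ i, (π i : ℝ) * b i = m

lemma sum_chiV {α : Type*} [DecidableEq α] (S T : Finset α) : ∑ a ∈ T, chiV S a = #(T ∩ S) := by
  rw [← filter_mem_eq_inter, natCast_card_filter]
  unfold chiV
  congr!

lemma chiV_injective {α : Type*} : Function.Injective (chiV : Finset α → α → ℝ) := by
  intro S T h
  ext a
  have := congrFun h a
  by_cases ha : a ∈ S <;> by_cases hb : a ∈ T <;> simp_all [chiV]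

lemma exists_eq_chiV {α : Type*} [Fintype α] {x : α → ℝ} (hx : ∀ a, x a = 0 ∨ x a = 1) :
    ∃ S : Finset α, x = chiV S := by
  refine ⟨univ.filter (x · = 1), funext fun a => ?_⟩
  rcases hx a with h | h <;> simp [chiV, h]

section

variable {α : Type*} {G : SimpleGraph α}

lemma IsCo2Plex.card_inter_le_two {S : Finset α} (hS : IsCo2Plex G S) {W : Finset α}
    (hW : G.IsClique (W : Set α)) : #(W ∩ S) ≤ 2 := by
  by_contra! h
  obtain ⟨a, ha, b, hb, c, hc, hab, hac, hbc⟩ := two_lt_card.1 h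
  rw [mem_inter] at ha hb hc
  refine (hS a ha.2).not_gt (one_lt_card.2 ⟨b, ?_, c, ?_, hbc⟩)
  · exact mem_filter.2 ⟨hb.2, hW ha.1 hb.1 hab⟩
  · exact mem_filter.2 ⟨hc.2, hW ha.1 hc.1 hac⟩

namespace IsUtterClique

variable {W : Finset α} {F : Finset G.edgeSet}

lemma isClique (h : IsUtterClique G W F) : G.IsClique (W : Set α) :=
  fun _ ha _ hb hab => h (Or.inl ⟨_, ha, rfl⟩) (Or.inl ⟨_, hb, rfl⟩) (by simpa using hab)

lemma adj_inl_inr (h : IsUtterClique G W F) {a : α} {f : G.edgeSet} (ha : a ∈ W) (hf : f ∈ F) :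
    (utter G).Adj (.inl a) (.inr f) :=
  h (Or.inl ⟨_, ha, rfl⟩) (Or.inr ⟨_, hf, rfl⟩) (by simp)

lemma adj_inr_inr (h : IsUtterClique G W F) {e f : G.edgeSet} (he : e ∈ F) (hf : f ∈ F)
    (hne : e ≠ f) : (utter G).Adj (.inr e) (.inr f) :=
  h (Or.inr ⟨_, he, rfl⟩) (Or.inr ⟨_, hf, rfl⟩) (by simpa using hne)

end IsUtterClique

end

section Graph

variable {G : SimpleGraph V}

@[simp] lemma mem_inc {v : V} {e : G.edgeSet} : e ∈ inc G v ↔ v ∈ (e : Sym2 V) := by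
  simp [inc]

@[simp] lemma mem_edgesIn {W : Finset V} {e : G.edgeSet} :
    e ∈ edgesIn G W ↔ ∀ v ∈ (e : Sym2 V), v ∈ W := by
  simp [edgesIn]

@[simp] lemma mem_edgesOut {W : Finset V} {e : G.edgeSet} :
    e ∈ edgesOut G W ↔ ∀ v ∈ (e : Sym2 V), v ∉ W := by
  simp [edgesOut]

lemma chiE_eq_chiV (S : Finset V) : chiE G S = chiV (edgesIn G S) := by
  ext e
  simp [chiE, chiV]

lemma edgesIn_inter (W S : Finset V) : edgesIn G (W ∩ S) = edgesIn G W ∩ edgesIn G S := by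
  ext e
  simp only [mem_edgesIn, mem_inter]
  exact ⟨fun h => ⟨fun v hv => (h v hv).1, fun v hv => (h v hv).2⟩,
    fun h v hv => ⟨h.1 v hv, h.2 v hv⟩⟩

lemma two_le_card_filter_mem {U : Finset V} {e : G.edgeSet} (he : e ∈ edgesIn G U) :
    2 ≤ #(U.filter (· ∈ (e : Sym2 V))) := by
  obtain ⟨⟨a, b⟩, hab⟩ := e
  rw [SimpleGraph.mem_edgeSet] at hab
  simp only [mem_edgesIn, Sym2.mem_iff, forall_eq_or_imp, forall_eq] at he
  rw [← card_pair hab.ne]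
  refine card_le_card fun v hv => ?_
  rcases mem_insert.1 hv with rfl | hv
  · exact mem_filter.2 ⟨he.1, Sym2.mem_mk_left _ _⟩
  · rw [mem_singleton.1 hv]
    exact mem_filter.2 ⟨he.2, Sym2.mem_mk_right _ _⟩

lemma eq_of_mem_edgesIn_of_card_le_two {U : Finset V} (hU : #U ≤ 2) {e f : G.edgeSet}
    (he : e ∈ edgesIn G U) (hf : f ∈ edgesIn G U) : e = f := by
  refine Subtype.ext (Sym2.ext fun v => ?_)
  by_cases hv : v ∈ U
  · have mem_of_mem_edgesIn : ∀ {g : G.edgeSet}, g ∈ edgesIn G U → v ∈ (g : Sym2 V) := by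
      intro g hg
      have ends_eq : U.filter (· ∈ (g : Sym2 V)) = U :=
        eq_of_subset_of_card_le (filter_subset _ _) (hU.trans (two_le_card_filter_mem hg))
      exact (mem_filter.1 (ends_eq ▸ hv)).2
    exact iff_of_true (mem_of_mem_edgesIn he) (mem_of_mem_edgesIn hf)
  · exact iff_of_false (fun h => hv (mem_edgesIn.1 he v h))
      (fun h => hv (mem_edgesIn.1 hf v h))

lemma two_mul_card_le_card {N : Finset G.edgeSet} {U : Finset V}
    (hN : ∀ v, #(inc G v ∩ N) ≤ 1) (hNU : N ⊆ edgesIn G U) : 2 * #N ≤ #U := by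
  have ends : ∀ e ∈ N, 2 ≤ #(U.bipartiteAbove (fun (e : G.edgeSet) v => v ∈ (e : Sym2 V)) e) :=
    fun e he => two_le_card_filter_mem (hNU he)
  have degrees : ∀ v ∈ U, #(N.bipartiteBelow (fun (e : G.edgeSet) v => v ∈ (e : Sym2 V)) v) ≤ 1 := by
    refine fun v _ => (card_le_card (t := inc G v ∩ N) fun e he => ?_).trans (hN v)
    rw [mem_bipartiteBelow] at he
    exact mem_inter.2 ⟨mem_inc.2 he.2, he.1⟩
  simpa [mul_comm] using card_mul_le_card_mul _ ends degrees

lemma card_inc_inter_edgesIn {S : Finset V} {u : V} (hu : u ∈ S) :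
    #(inc G u ∩ edgesIn G S) = #(S.filter fun v => G.Adj u v) := by
  symm
  refine card_bij (fun v hv => ⟨s(u, v), G.mem_edgeSet.2 (mem_filter.1 hv).2⟩) ?_ ?_ ?_
  · intro v hv
    simp [hu, (mem_filter.1 hv).1]
  · intro v _ w _ h
    exact Sym2.congr_right.1 (congrArg Subtype.val h)
  · rintro ⟨⟨a, b⟩, hab⟩ he
    simp only [mem_inter, mem_inc, mem_edgesIn, Sym2.mem_iff, forall_eq_or_imp, forall_eq] at he
    rcases he with ⟨rfl | rfl, ha, hb⟩
    · exact ⟨b, mem_filter.2 ⟨hb, hab⟩, rfl⟩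
    · exact ⟨a, mem_filter.2 ⟨ha, hab.symm⟩, Subtype.ext Sym2.eq_swap⟩

lemma isCo2Plex_iff_card_inc_inter_edgesIn_le_one {S : Finset V} :
    IsCo2Plex G S ↔ ∀ v, #(inc G v ∩ edgesIn G S) ≤ 1 := by
  refine ⟨fun hS v => ?_, fun h u hu => card_inc_inter_edgesIn hu ▸ h u⟩
  by_cases hv : v ∈ S
  · exact card_inc_inter_edgesIn hv ▸ hS v hv
  · refine card_le_one.2 fun e he _ _ => absurd ?_ hv
    simp only [mem_inter, mem_inc, mem_edgesIn] at he
    exact he.2 v he.1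

namespace IsCo2Plex

lemma eq_of_mem_of_mem {S : Finset V} (hS : IsCo2Plex G S) {e f : G.edgeSet}
    (he : e ∈ edgesIn G S) (hf : f ∈ edgesIn G S) {v : V} (hve : v ∈ (e : Sym2 V)) (hvf : v ∈ (f : Sym2 V)) : e = f :=
  card_le_one.1 (isCo2Plex_iff_card_inc_inter_edgesIn_le_one.1 hS v) e
    (mem_inter.2 ⟨mem_inc.2 hve, he⟩) f (mem_inter.2 ⟨mem_inc.2 hvf, hf⟩)

lemma not_utter_adj_inr_inr {S : Finset V} (hS : IsCo2Plex G S) {e f : G.edgeSet}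
    (he : e ∈ edgesIn G S) (hf : f ∈ edgesIn G S) : ¬ (utter G).Adj (.inr e) (.inr f) := by
  rintro ⟨hne, ⟨v, hve, hvf⟩ | ⟨a, ha, b, hb, hab⟩⟩
  · exact hne (hS.eq_of_mem_of_mem he hf hve hvf)
  · by_cases hbe : b ∈ (e : Sym2 V)
    · exact hne (hS.eq_of_mem_of_mem he hf hbe hb)
    · let ab : G.edgeSet := ⟨s(a, b), G.mem_edgeSet.2 hab⟩
      have hab_mem : ab ∈ edgesIn G S := by
        simp [ab, mem_edgesIn.1 he a ha, mem_edgesIn.1 hf b hb]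
      have hab_eq : ab = e := hS.eq_of_mem_of_mem hab_mem he (Sym2.mem_mk_left a b) ha
      exact hbe (hab_eq ▸ Sym2.mem_mk_right a b)

lemma not_utter_adj_inl_inr {S : Finset V} (hS : IsCo2Plex G S) {u : V} {f : G.edgeSet}
    (hu : u ∈ S) (hf : f ∈ edgesIn G S) (huf : u ∉ (f : Sym2 V)) :
    ¬ (utter G).Adj (.inl u) (.inr f) := by
  rintro (h | ⟨z, hz, huz⟩)
  · exact huf h
  · let uz : G.edgeSet := ⟨s(u, z), G.mem_edgeSet.2 huz⟩
    have huz_mem : uz ∈ edgesIn G S := by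
      simp [uz, hu, mem_edgesIn.1 hf z hz]
    have huz_eq : uz = f := hS.eq_of_mem_of_mem huz_mem hf (Sym2.mem_mk_right u z) hz
    exact huf (huz_eq ▸ Sym2.mem_mk_left u z)

end IsCo2Plex

lemma IsUtterClique.card_inter_add_card_le {W S : Finset V} {F : Finset G.edgeSet}
    (hWF : IsUtterClique G W F) (hS : IsCo2Plex G S) :
    #(W ∩ S) + #(F ∩ edgesOut G W ∩ edgesIn G S) ≤ 1 + #(edgesIn G W ∩ edgesIn G S) := by
  have hT : #(W ∩ S) ≤ 2 := hS.card_inter_le_two hWF.isClique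
  have hB : #(F ∩ edgesOut G W ∩ edgesIn G S) ≤ 1 := card_le_one.2 fun e he f hf => by
    by_contra hne
    rw [mem_inter, mem_inter] at he hf
    exact hS.not_utter_adj_inr_inr he.2 hf.2 (hWF.adj_inr_inr he.1.1 hf.1.1 hne)
  have hTB : (W ∩ S).Nonempty → #(F ∩ edgesOut G W ∩ edgesIn G S) = 0 := by
    rintro ⟨u, hu⟩
    refine card_eq_zero.2 (eq_empty_of_forall_notMem fun f hf => ?_)
    rw [mem_inter] at hu
    rw [mem_inter, mem_inter] at hf
    have huf : u ∉ (f : Sym2 V) := fun h => mem_edgesOut.1 hf.1.2 u h hu.1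
    exact hS.not_utter_adj_inl_inr hu.2 hf.2 huf (hWF.adj_inl_inr hu.1 hf.1.1)
  have hTA : #(W ∩ S) = 2 → 1 ≤ #(edgesIn G W ∩ edgesIn G S) := by
    intro h
    obtain ⟨a, b, hab, hWS⟩ := card_eq_two.1 h
    have ha : a ∈ W ∩ S := hWS ▸ mem_insert_self a {b}
    have hb : b ∈ W ∩ S := hWS ▸ mem_insert_of_mem (mem_singleton_self b)
    have hadj : G.Adj a b := hWF.isClique (mem_inter.1 ha).1 (mem_inter.1 hb).1 hab
    rw [← edgesIn_inter, hWS]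
    exact card_pos.2 ⟨⟨s(a, b), G.mem_edgeSet.2 hadj⟩, by simp⟩
  rcases (W ∩ S).eq_empty_or_nonempty with h | h
  · rw [h, card_empty]
    omega
  · have := hTB h
    by_cases h2 : #(W ∩ S) = 2
    · have := hTA h2
      omega
    · omega

lemma forall_card_inc_inter_le_chiV_iff {S : Finset V} {M : Finset G.edgeSet} :
    (∀ v, (#(inc G v ∩ M) : ℝ) ≤ chiV S v) ↔ M ⊆ edgesIn G S ∧ ∀ v, #(inc G v ∩ M) ≤ 1 := by
  constructor
  · intro h
    refine ⟨fun e he => mem_edgesIn.2 fun v hv => ?_, fun v => ?_⟩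
    · by_contra hvS
      have hpos : 0 < #(inc G v ∩ M) := card_pos.2 ⟨e, mem_inter.2 ⟨mem_inc.2 hv, he⟩⟩
      have := h v
      simp only [chiV, if_neg hvS] at this
      exact_mod_cast this.not_gt (by exact_mod_cast hpos)
    · have hle : chiV S v ≤ 1 := by unfold chiV; split_ifs <;> norm_num
      exact_mod_cast (h v).trans hle
  · rintro ⟨hMS, hM⟩ v
    by_cases hv : v ∈ S
    · simpa [chiV, hv] using hM v
    · have hempty : inc G v ∩ M = ∅ := eq_empty_of_forall_notMem fun e he => by
        rw [mem_inter, mem_inc] at he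
        exact hv (mem_edgesIn.1 (hMS he.2) v he.1)
      simp [chiV, hv, hempty]

lemma mem_of_card_inter_le {S W : Finset V} {M : Finset G.edgeSet} {e : G.edgeSet}
    (hMS : M ⊆ edgesIn G S) (hM : ∀ v, #(inc G v ∩ M) ≤ 1)
    (heW : e ∈ edgesIn G W) (heS : e ∈ edgesIn G S)
    (h : #(W ∩ S) ≤ 1 + #(edgesIn G W ∩ M)) : e ∈ M := by
  -- `edgesIn G W ∩ M` is a matching on `W ∩ S`, so `h` forces `W ∩ S` to be the two ends of `e`.
  have he : e ∈ edgesIn G (W ∩ S) := by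
    rw [edgesIn_inter]
    exact mem_inter.2 ⟨heW, heS⟩
  have hsub : edgesIn G W ∩ M ⊆ edgesIn G (W ∩ S) := by
    rw [edgesIn_inter]
    exact inter_subset_inter_left hMS
  have hmatching : 2 * #(edgesIn G W ∩ M) ≤ #(W ∩ S) :=
    two_mul_card_le_card (fun v => (card_le_card (inter_subset_inter_left inter_subset_right)).trans
      (hM v)) hsub
  have h2 : 2 ≤ #(W ∩ S) := (two_le_card_filter_mem he).trans (card_filter_le _ _)
  obtain ⟨f, hf⟩ : (edgesIn G W ∩ M).Nonempty := card_pos.1 (by omega)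
  rw [eq_of_mem_edgesIn_of_card_le_two (by omega) he (hsub hf)]
  exact (mem_inter.1 hf).2

end Graph

/-- If a family of utter cliques covers all edges (via the
edge sets of their vertex parts), then the associated inequalities together
with (8) characterize the binary extended incidence vectors of co-2-plexes. -/
theorem stmt16 (G : SimpleGraph V)
    (𝒰 : Set (Finset V × Finset G.edgeSet))
    (hUC : ∀ p ∈ 𝒰, IsUtterClique G p.1 p.2)
    (hcover : ∀ e : G.edgeSet, ∃ p ∈ 𝒰, e ∈ edgesIn G p.1)
    (x : V → ℝ) (y : G.edgeSet → ℝ)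
    (hx : ∀ v, x v = 0 ∨ x v = 1) (hy : ∀ e, y e = 0 ∨ y e = 1) :
    (∃ S : Finset V, IsCo2Plex G S ∧ x = chiV S ∧ y = chiE G S) ↔
      ((∀ p ∈ 𝒰,
          ∑ v ∈ p.1, x v + ∑ e ∈ p.2 ∩ edgesOut G p.1, y e
            - ∑ e ∈ edgesIn G p.1, y e ≤ 1) ∧
        ∀ v : V, ∑ e ∈ inc G v, y e ≤ x v) := by
  obtain ⟨S, rfl⟩ := exists_eq_chiV hx
  obtain ⟨M, rfl⟩ := exists_eq_chiV hy
  simp only [sum_chiV, chiE_eq_chiV, chiV_injective.eq_iff, forall_card_inc_inter_le_chiV_iff,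
    sub_le_iff_le_add]
  -- now `y` is the incidence vector of `M` and every sum is a cardinality
  constructor
  · rintro ⟨_, hS, rfl, rfl⟩
    refine ⟨fun p hp => ?_, subset_rfl, isCo2Plex_iff_card_inc_inter_edgesIn_le_one.1 hS⟩
    exact_mod_cast (hUC p hp).card_inter_add_card_le hS
  · rintro ⟨hineq, hMS, hM⟩
    have hSM : edgesIn G S ⊆ M := fun e he => by
      obtain ⟨p, hp, hep⟩ := hcover e
      refine mem_of_card_inter_le hMS hM hep he ?_
      exact_mod_cast (le_add_of_nonneg_right (Nat.cast_nonneg _)).trans (hineq p hp)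
    obtain rfl := hMS.antisymm hSM
    exact ⟨S, isCo2Plex_iff_card_inc_inter_edgesIn_le_one.2 hM, rfl, rfl⟩
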